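/- arXiv:2107.05156 — 2 statements merged into one kernel-verified Lean document; each statement's English description precedes it below -/
import Mathlib

section
/- Let p be a primitive polynomial of degree k ≥ 1 over 𝔽₂ and let c be the m-sequence generated by p from a nonzero initial state. Then the map j ↦ (c_j, c_{j+1}, …, c_{j+k−1}) is a bijection from {0, 1, …, 2^k − 2} onto the set of nonzero vectors 𝔽₂^k ∖ {0}; that is, every nonzero k-tuple occurs exactly once as a window of length k within one period of the m-sequence. -/
/-! In the field `F = 𝔽₂[x]/(p)`, with `α` the class of `x`, every solution of the recurrence
has the form `c m = L (α⁻¹ ^ m)` for a linear functional `L : F → 𝔽₂`, so the window of `c` at `j`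
is `W (α⁻¹ ^ j)`, where `W β = (L (α⁻¹ ^ i * β))_{i < k}` is linear. A nonzero `β` in the kernel
of `W` would make the solution `m ↦ L (α⁻¹ ^ m * β)` vanish identically, and since `α⁻¹` generates
`Fˣ` this forces `L = 0`, i.e. `c = 0`; so `W` is injective, hence bijective as `dim F = k`.
Finally `j ↦ α⁻¹ ^ j` maps `{0, …, 2^k - 2}` bijectively onto `Fˣ` because `α` has order
`2^k - 1 = |Fˣ|`. -/

/-- A polynomial `p` over 𝔽₂ is primitive of degree `k` if it is irreducible of degree `k`
and the residue class of `X` in `𝔽₂[x]/(p)` has multiplicative order `2^k - 1`. -/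
def IsPrimitivePoly (k : ℕ) (p : Polynomial (ZMod 2)) : Prop :=
  p.natDegree = k ∧ Irreducible p ∧ orderOf (AdjoinRoot.root p) = 2 ^ k - 1

/-- The PR code `C(p, n)`: vectors `v ∈ 𝔽₂ⁿ` with `∑_{i=0}^{k} p_i v_{m-i} = 0`
for all `k ≤ m ≤ n - 1`. -/
def PRCode (k n : ℕ) (p : Polynomial (ZMod 2)) : Set (Fin n → ZMod 2) :=
  {v | ∀ m : Fin n, k ≤ (m : ℕ) →
    ∑ i ∈ Finset.range (k + 1),
      p.coeff i * v ⟨(m : ℕ) - i, lt_of_le_of_lt (Nat.sub_le _ _) m.isLt⟩ = 0}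

open Polynomial

def SatisfiesRecurrence {R : Type*} [Semiring R] (p : R[X]) (k : ℕ) (c : ℕ → R) : Prop :=
  ∀ m, k ≤ m → ∑ i ∈ Finset.range (k + 1), p.coeff i * c (m - i) = 0

namespace SatisfiesRecurrence

variable {R : Type*} [CommRing R] {p : R[X]} {k : ℕ} {c d : ℕ → R}

theorem sub (hc : SatisfiesRecurrence p k c) (hd : SatisfiesRecurrence p k d) :
    SatisfiesRecurrence p k (c - d) := by
  intro m hm
  simp only [Pi.sub_apply, mul_sub, Finset.sum_sub_distrib, hc m hm, hd m hm, sub_zero]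

theorem eq_zero [NoZeroDivisors R] (h0 : p.coeff 0 ≠ 0) (hc : SatisfiesRecurrence p k c)
    (hinit : ∀ m < k, c m = 0) : c = 0 := by
  funext m
  induction m using Nat.strong_induction_on with
  | _ m ih =>
    rcases lt_or_ge m k with hm | hm
    · exact hinit m hm
    · have h := hc m hm
      rw [Finset.sum_range_succ', Finset.sum_eq_zero fun i hi => by
        rw [ih _ (by simp only [Finset.mem_range] at hi; omega), Pi.zero_apply, mul_zero]] at h
      simpa [h0] using h

theorem eq_of_eq_init [NoZeroDivisors R] (h0 : p.coeff 0 ≠ 0) (hc : SatisfiesRecurrence p k c)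
    (hd : SatisfiesRecurrence p k d) (hinit : ∀ m < k, c m = d m) : c = d :=
  sub_eq_zero.mp <| (hc.sub hd).eq_zero h0 fun m hm => sub_eq_zero.mpr (hinit m hm)

end SatisfiesRecurrence

section Field

variable {K F : Type*} [Field K] [Field F] [Algebra K F] {p : K[X]} {k : ℕ}

theorem satisfiesRecurrence_inv_pow (L : F →ₗ[K] K) {α : F} (hα : α ≠ 0) (hp : aeval α p = 0)
    (hdeg : p.natDegree ≤ k) : SatisfiesRecurrence p k fun m => L (α⁻¹ ^ m) := by
  intro m hm
  have hterm : ∀ i ∈ Finset.range (k + 1),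
      p.coeff i * L (α⁻¹ ^ (m - i)) = L (α⁻¹ ^ m * (p.coeff i • α ^ i)) := by
    intro i hi
    have him : i ≤ m := by simp only [Finset.mem_range] at hi; omega
    rw [pow_sub₀ _ (inv_ne_zero hα) him, inv_pow α i, inv_inv, mul_smul_comm, map_smul, smul_eq_mul]
  rw [Finset.sum_congr rfl hterm, ← map_sum, ← Finset.mul_sum,
    ← aeval_eq_sum_range' (by omega), hp, mul_zero, map_zero]

theorem exists_linearMap_eq_inv_pow (pb : PowerBasis K F) (h0 : p.coeff 0 ≠ 0)
    (hα : pb.gen ≠ 0) (hp : aeval pb.gen p = 0) (hdeg : p.natDegree ≤ pb.dim) {c : ℕ → K}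
    (hc : SatisfiesRecurrence p pb.dim c) : ∃ L : F →ₗ[K] K, ∀ m, c m = L (pb.gen⁻¹ ^ m) := by
  set α := pb.gen
  set k := pb.dim
  -- For `m < k`, `α ^ (k - 1) * α⁻¹ ^ m = α ^ (k - 1 - m)` is a power-basis vector, on which
  -- `M` is prescribed so as to recover the initial values of `c`.
  let M := pb.basis.constr K fun i => c (k - 1 - i)
  refine ⟨M ∘ₗ LinearMap.mulLeft K (α ^ (k - 1)), fun m => congrFun (hc.eq_of_eq_init h0
    (satisfiesRecurrence_inv_pow _ hα hp hdeg) fun m hm => ?_) m⟩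
  have hpow : α ^ (k - 1) * α⁻¹ ^ m = pb.basis ⟨k - 1 - m, by omega⟩ := by
    rw [pb.basis_eq_pow, Fin.val_mk, pow_sub₀ α hα (by omega : m ≤ k - 1), inv_pow]
  simp only [LinearMap.comp_apply, LinearMap.mulLeft_apply, hpow, M, pb.basis.constr_basis]
  congr 1
  omega

end Field

section Window

variable {K F : Type*} [Field K] [Field F] [Algebra K F]

def windowMap (L : F →ₗ[K] K) (γ : F) (k : ℕ) : F →ₗ[K] Fin k → K :=
  LinearMap.pi fun i => L ∘ₗ LinearMap.mulLeft K (γ ^ (i : ℕ))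

theorem windowMap_apply (L : F →ₗ[K] K) (γ : F) (k : ℕ) (β : F) (i : Fin k) :
    windowMap L γ k β i = L (γ ^ (i : ℕ) * β) :=
  rfl

theorem window_eq_windowMap_pow {L : F →ₗ[K] K} {γ : F} {c : ℕ → K} (hc : ∀ m, c m = L (γ ^ m))
    (k j : ℕ) : (fun i : Fin k => c (j + i)) = windowMap L γ k (γ ^ j) := by
  funext i
  rw [windowMap_apply, hc, pow_add, mul_comm]

theorem windowMap_inv_injective {p : K[X]} {k : ℕ} (h0 : p.coeff 0 ≠ 0) {α : F} (hα : α ≠ 0)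
    (hp : aeval α p = 0) (hdeg : p.natDegree ≤ k) (hgen : ∀ x ≠ 0, ∃ n, α⁻¹ ^ n = x)
    {L : F →ₗ[K] K} (hL : L ≠ 0) : Function.Injective (windowMap L α⁻¹ k) := by
  rw [← LinearMap.ker_eq_bot, LinearMap.ker_eq_bot']
  intro β hβ
  by_contra hβ0
  have hseq : (fun m => (L ∘ₗ LinearMap.mulRight K β) (α⁻¹ ^ m)) = 0 :=
    (satisfiesRecurrence_inv_pow _ hα hp hdeg).eq_zero h0 fun m hm => congrFun hβ ⟨m, hm⟩
  refine hL (LinearMap.ext fun x => ?_)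
  rcases eq_or_ne x 0 with rfl | hx
  · exact map_zero L
  obtain ⟨n, hn⟩ := hgen (x * β⁻¹) (mul_ne_zero hx (inv_ne_zero hβ0))
  simpa [hn, hβ0] using congrFun hseq n

end Window

theorem IsPrimitiveRoot.bijOn_pow_Iio {F : Type*} [Field F] [Finite F] {γ : F}
    (hγ : IsPrimitiveRoot γ (Nat.card F - 1)) :
    Set.BijOn (γ ^ ·) (Set.Iio (Nat.card F - 1)) {x | x ≠ 0} := by
  have := Fintype.ofFinite F
  rw [Nat.card_eq_fintype_card] at hγ ⊢
  have hq : Fintype.card F - 1 ≠ 0 := by have := Fintype.one_lt_card (α := F); omega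
  have : NeZero (Fintype.card F - 1) := ⟨hq⟩
  refine ⟨fun j _ => pow_ne_zero j (hγ.ne_zero hq), fun i hi j hj => hγ.pow_inj hi hj,
    fun x hx => ?_⟩
  obtain ⟨j, hj, rfl⟩ := hγ.eq_pow_of_pow_eq_one (FiniteField.pow_card_sub_one_eq_one x hx)
  exact ⟨j, hj, rfl⟩

theorem Function.Bijective.bijOn_ne_zero {M N G : Type*} [Zero M] [Zero N] [FunLike G M N]
    [ZeroHomClass G M N] {f : G} (hf : Function.Bijective f) :
    Set.BijOn f {x | x ≠ 0} {y | y ≠ 0} := by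
  convert hf.bijOn_preimage (t := {y : N | y ≠ 0})
  ext x
  exact (map_ne_zero_iff f hf.1).symm

theorem AdjoinRoot.natCard_eq_pow_natDegree {K : Type*} [Field K] {f : K[X]} (hf : f ≠ 0) :
    Nat.card (AdjoinRoot f) = Nat.card K ^ f.natDegree := by
  have := (AdjoinRoot.powerBasis hf).finite
  rw [Module.natCard_eq_pow_finrank (K := K), AdjoinRoot.powerBasis hf |>.finrank]
  rfl

theorem AdjoinRoot.coeff_zero_ne_zero {K : Type*} [Field K] {f : K[X]} [Fact (Irreducible f)]
    (h : AdjoinRoot.root f ≠ 0) : f.coeff 0 ≠ 0 := by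
  have hf : f ≠ 0 := (Fact.out : Irreducible f).ne_zero
  have := minpoly.coeff_zero_ne_zero (AdjoinRoot.isIntegral_root hf) h
  rw [AdjoinRoot.minpoly_root hf, coeff_mul_C] at this
  exact left_ne_zero_of_mul this

namespace IsPrimitivePoly

variable {k : ℕ} {p : Polynomial (ZMod 2)} [Fact (Irreducible p)]

theorem root_ne_zero (hp : IsPrimitivePoly k p) (hk : 1 ≤ k) : AdjoinRoot.root p ≠ 0 := by
  intro h
  have hord := hp.2.2
  rw [h, orderOf_zero] at hord
  have : 2 ≤ 2 ^ k := Nat.le_self_pow (by omega) 2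
  omega

theorem natCard_adjoinRoot (hp : IsPrimitivePoly k p) : Nat.card (AdjoinRoot p) = 2 ^ k := by
  rw [AdjoinRoot.natCard_eq_pow_natDegree (Fact.out : Irreducible p).ne_zero, Nat.card_zmod, hp.1]

theorem isPrimitiveRoot_inv_root (hp : IsPrimitivePoly k p) :
    IsPrimitiveRoot (AdjoinRoot.root p)⁻¹ (Nat.card (AdjoinRoot p) - 1) := by
  rw [hp.natCard_adjoinRoot, ← hp.2.2]
  exact (IsPrimitiveRoot.orderOf _).inv

end IsPrimitivePoly

/-- The map `j ↦ (c_j, …, c_{j+k-1})` is a bijection from `{0, …, 2^k - 2}`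
onto the nonzero vectors of `𝔽₂^k`. -/
theorem stmt1 (k : ℕ) (hk : 1 ≤ k)
    (p : Polynomial (ZMod 2)) (hp : IsPrimitivePoly k p)
    (c : ℕ → ZMod 2)
    (hrec : ∀ m, k ≤ m → ∑ i ∈ Finset.range (k + 1), p.coeff i * c (m - i) = 0)
    (hinit : ∃ i < k, c i ≠ 0) :
    Set.BijOn (fun j : ℕ => fun i : Fin k => c (j + i))
      (Set.Iio (2 ^ k - 1)) {v : Fin k → ZMod 2 | v ≠ 0} := by
  have : Fact (Irreducible p) := ⟨hp.2.1⟩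
  set α := AdjoinRoot.root p
  have hα : α ≠ 0 := hp.root_ne_zero hk
  have h0 : p.coeff 0 ≠ 0 := AdjoinRoot.coeff_zero_ne_zero hα
  have hroot : aeval α p = 0 := by rw [AdjoinRoot.aeval_eq, AdjoinRoot.mk_self]
  have : Finite (AdjoinRoot p) :=
    Nat.finite_of_card_ne_zero (by rw [hp.natCard_adjoinRoot]; positivity)
  have hpow := hp.isPrimitiveRoot_inv_root.bijOn_pow_Iio
  rw [hp.natCard_adjoinRoot] at hpow
  obtain rfl := hp.1
  let pb := AdjoinRoot.powerBasis hp.2.1.ne_zero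
  obtain ⟨L, hL⟩ := exists_linearMap_eq_inv_pow pb h0 hα hroot le_rfl hrec
  have hL0 : L ≠ 0 := by
    rintro rfl
    obtain ⟨i, -, hi⟩ := hinit
    exact hi (hL i)
  have hinj := windowMap_inv_injective h0 hα hroot le_rfl
    (fun x hx => (hpow.surjOn hx).imp fun _ => And.right) hL0
  have hsurj := (LinearMap.injective_iff_surjective_of_finrank_eq_finrank
    (by rw [pb.finrank, Module.finrank_fin_fun]; rfl)).mp hinj
  exact (Function.Bijective.bijOn_ne_zero ⟨hinj, hsurj⟩ |>.comp hpow).congr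
    fun j _ => (window_eq_windowMap_pow hL _ j).symm
end

section
/- Let k ≥ 2 and let p₁ and p₂ be any two primitive polynomials of degree k over 𝔽₂. Then for every t ≥ 1, the number of polynomials q ∈ 𝔽₂[x] with q(0) = 1, degree at most 2^k − 2, and exactly t nonzero coefficients that are divisible by p₁ equals the corresponding number for p₂; that is, the count N_{k,t} of t-nomial multiples of degree at most 2^k − 2 of a primitive polynomial of degree k does not depend on the choice of the primitive polynomial. -/
open Polynomial

namespace Polynomial

theorem coeff_sum_X_pow {R : Type*} [Semiring R] (E : Finset ℕ) (m : ℕ) :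
    (∑ e ∈ E, X ^ e : R[X]).coeff m = if m ∈ E then 1 else 0 := by
  simp only [finsetSum_coeff, coeff_X_pow, Finset.sum_ite_eq]

theorem support_sum_X_pow {R : Type*} [Semiring R] [Nontrivial R] (E : Finset ℕ) :
    (∑ e ∈ E, X ^ e : R[X]).support = E := by
  ext m
  rw [mem_support_iff, coeff_sum_X_pow]
  simp

theorem coeff_eq_one_iff_mem_support {q : (ZMod 2)[X]} {m : ℕ} :
    q.coeff m = 1 ↔ m ∈ q.support := by
  rw [mem_support_iff]
  generalize q.coeff m = a
  revert a
  decide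

theorem sum_X_pow_support (q : (ZMod 2)[X]) : ∑ e ∈ q.support, X ^ e = q := by
  ext m
  rw [coeff_sum_X_pow]
  split_ifs with hm
  · exact (coeff_eq_one_iff_mem_support.mpr hm).symm
  · exact (notMem_support_iff.mp hm).symm

theorem aeval_eq_sum_support_pow {A : Type*} [CommSemiring A] [Algebra (ZMod 2) A] (β : A)
    (q : (ZMod 2)[X]) : aeval β q = ∑ e ∈ q.support, β ^ e := by
  conv_lhs => rw [← sum_X_pow_support q]
  simp only [map_sum, map_pow, aeval_X]

end Polynomial

theorem Nat.mul_mod_mul_mod_of_mul_modEq_one {n s s' e : ℕ} (h : s * s' ≡ 1 [MOD n])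
    (he : e < n) : s' * (s * e % n) % n = e := by
  have : s' * (s * e % n) ≡ e [MOD n] :=
    calc s' * (s * e % n) ≡ s' * (s * e) [MOD n] := (Nat.mod_modEq _ _).mul_left _
      _ = s * s' * e := by ring
      _ ≡ 1 * e [MOD n] := h.mul_right _
      _ = e := one_mul e
  exact Eq.trans this (Nat.mod_eq_of_lt he)

theorem Nat.injOn_mul_mod_of_coprime {n s : ℕ} (hs : s.Coprime n) :
    Set.InjOn (s * · % n) {e | e < n} := fun _ hx _ hy hxy =>
  (Nat.mod_eq_of_lt hx).symm.trans <|
    Eq.trans (Nat.ModEq.cancel_left_of_coprime (Nat.coprime_comm.mp hs) hxy) (Nat.mod_eq_of_lt hy)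

/-- For `s` coprime to `n` and `q` of degree `< n`, this is `q(X ^ s)` reduced modulo
`X ^ n - 1`. -/
noncomputable def scaleExponents (n s : ℕ) (q : (ZMod 2)[X]) : (ZMod 2)[X] :=
  ∑ e ∈ q.support.image (s * · % n), X ^ e

section scaleExponents

variable {n s s' : ℕ} {q : (ZMod 2)[X]}

theorem support_scaleExponents :
    (scaleExponents n s q).support = q.support.image (s * · % n) :=
  support_sum_X_pow _

theorem scaleExponents_scaleExponents (h : s * s' ≡ 1 [MOD n]) (hq : q.natDegree < n) :
    scaleExponents n s' (scaleExponents n s q) = q := by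
  have hinv : q.support.image ((s' * · % n) ∘ (s * · % n)) = q.support :=
    (Finset.image_congr (g := id) fun e he =>
      Nat.mul_mod_mul_mod_of_mul_modEq_one h ((le_natDegree_of_mem_supp e he).trans_lt hq)).trans
      Finset.image_id
  rw [scaleExponents, support_scaleExponents, Finset.image_image, hinv, sum_X_pow_support]

theorem injOn_support_mul_mod (hs : s.Coprime n) (hq : q.natDegree < n) :
    Set.InjOn (s * · % n) q.support :=
  (Nat.injOn_mul_mod_of_coprime hs).mono fun e he =>
    (le_natDegree_of_mem_supp e (Finset.mem_coe.mp he)).trans_lt hq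

theorem card_support_scaleExponents (hs : s.Coprime n) (hq : q.natDegree < n) :
    (scaleExponents n s q).support.card = q.support.card := by
  rw [support_scaleExponents, Finset.card_image_of_injOn (injOn_support_mul_mod hs hq)]

theorem zero_mem_support_scaleExponents_iff (hs : s.Coprime n) (hq : q.natDegree < n) :
    0 ∈ (scaleExponents n s q).support ↔ 0 ∈ q.support := by
  rw [support_scaleExponents, Finset.mem_image]
  refine ⟨fun ⟨e, he, he0⟩ => ?_, fun h0 => ⟨0, h0, by simp⟩⟩
  have he_lt : e < n := (le_natDegree_of_mem_supp e he).trans_lt hq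
  have : e = 0 := Nat.injOn_mul_mod_of_coprime hs he_lt (Nat.zero_lt_of_lt he_lt)
    (by simpa using he0)
  exact this ▸ he

theorem natDegree_scaleExponents_lt (hn : 0 < n) : (scaleExponents n s q).natDegree < n := by
  by_cases h0 : scaleExponents n s q = 0
  · rwa [h0, natDegree_zero]
  obtain ⟨e, -, he⟩ := Finset.mem_image.mp
    (support_scaleExponents ▸ natDegree_mem_support_of_nonzero h0)
  exact he ▸ Nat.mod_lt _ hn

theorem aeval_scaleExponents {A : Type*} [CommSemiring A] [Algebra (ZMod 2) A] {β : A}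
    (hβ : β ^ n = 1) (hs : s.Coprime n) (hq : q.natDegree < n) :
    aeval β (scaleExponents n s q) = aeval (β ^ s) q := by
  rw [aeval_eq_sum_support_pow, aeval_eq_sum_support_pow, support_scaleExponents,
    Finset.sum_image (injOn_support_mul_mod hs hq)]
  refine Finset.sum_congr rfl fun e _ => ?_
  rw [← pow_eq_pow_mod _ hβ, pow_mul]

end scaleExponents

def nomialsVanishingAt {A : Type*} [CommSemiring A] [Algebra (ZMod 2) A] (n t : ℕ) (β : A) :
    Set (ZMod 2)[X] :=
  {q | q.coeff 0 = 1 ∧ q.natDegree < n ∧ q.support.card = t ∧ aeval β q = 0}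

section nomialsVanishingAt

variable {A : Type*} [CommSemiring A] [Algebra (ZMod 2) A] {n s s' t : ℕ} {β : A}

theorem nomialsVanishingAt_map {B : Type*} [CommSemiring B] [Algebra (ZMod 2) B]
    {φ : A →ₐ[ZMod 2] B} (hφ : Function.Injective φ) (β : A) :
    nomialsVanishingAt n t (φ β) = nomialsVanishingAt n t β := by
  ext q
  simp only [nomialsVanishingAt, Set.mem_ofPred_eq, aeval_algHom_apply,
    map_eq_zero_iff φ hφ]

theorem mapsTo_scaleExponents (hn : 0 < n) (hs : s.Coprime n) (hβ : β ^ n = 1) :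
    Set.MapsTo (scaleExponents n s) (nomialsVanishingAt n t (β ^ s))
      (nomialsVanishingAt n t β) := by
  rintro q ⟨h0, hq, hcard, hroot⟩
  refine ⟨?_, natDegree_scaleExponents_lt hn, (card_support_scaleExponents hs hq).trans hcard,
    (aeval_scaleExponents hβ hs hq).trans hroot⟩
  rw [coeff_eq_one_iff_mem_support, zero_mem_support_scaleExponents_iff hs hq,
    ← coeff_eq_one_iff_mem_support, h0]

theorem ncard_nomialsVanishingAt_pow (hn : 0 < n) (hβ : β ^ n = 1) (h : s * s' ≡ 1 [MOD n]) :
    (nomialsVanishingAt n t (β ^ s)).ncard = (nomialsVanishingAt n t β).ncard := by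
  have h' : s' * s ≡ 1 [MOD n] := mul_comm s s' ▸ h
  have hβs : (β ^ s) ^ n = 1 := by rw [← pow_mul, mul_comm, pow_mul, hβ, one_pow]
  have hβss' : (β ^ s) ^ s' = β := by
    rw [← pow_mul, pow_eq_pow_mod _ hβ, show s * s' % n = 1 % n from h, ← pow_eq_pow_mod _ hβ,
      pow_one]
  have hback := mapsTo_scaleExponents (t := t) hn (Nat.coprime_of_mul_modEq_one _ h') hβs
  rw [hβss'] at hback
  refine Set.BijOn.ncard_eq <| Set.InvOn.bijOn ⟨fun q hq => ?_, fun q hq => ?_⟩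
    (mapsTo_scaleExponents hn (Nat.coprime_of_mul_modEq_one _ h) hβ) hback
  · exact scaleExponents_scaleExponents h hq.2.1
  · exact scaleExponents_scaleExponents h' hq.2.1

end nomialsVanishingAt

theorem AdjoinRoot.setOf_dvd_eq_nomialsVanishingAt {p : (ZMod 2)[X]} {n : ℕ} (hn : 0 < n)
    (t : ℕ) :
    {q : (ZMod 2)[X] | q.coeff 0 = 1 ∧ q.natDegree ≤ n - 1 ∧ q.support.card = t ∧ p ∣ q}
      = nomialsVanishingAt n t (root p) := by
  ext q
  simp only [nomialsVanishingAt, Set.mem_ofPred_eq, aeval_eq, mk_eq_zero,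
    Nat.le_sub_one_iff_lt hn]

theorem AdjoinRoot.nonempty_algHom_of_natDegree_dvd {F : Type*} [Field F] [Finite F]
    {p₁ p₂ : F[X]} [hp₁ : Fact (Irreducible p₁)] [hp₂ : Fact (Irreducible p₂)]
    (h : p₁.natDegree ∣ p₂.natDegree) : Nonempty (AdjoinRoot p₁ →ₐ[F] AdjoinRoot p₂) := by
  have := (powerBasis hp₂.out.ne_zero).finite
  have : Finite (AdjoinRoot p₂) := Module.finite_of_finite F
  apply FiniteField.nonempty_algHom_of_finrank_dvd
  rwa [(powerBasis hp₁.out.ne_zero).finrank, (powerBasis hp₂.out.ne_zero).finrank,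
    powerBasis_dim, powerBasis_dim]

theorem IsPrimitiveRoot.exists_pow_eq_and_mul_modEq_one {R : Type*} [CommRing R] [IsDomain R]
    {n : ℕ} [NeZero n] {β γ : R} (hβ : IsPrimitiveRoot β n) (hγ : IsPrimitiveRoot γ n) :
    ∃ s s' : ℕ, β ^ s = γ ∧ s * s' ≡ 1 [MOD n] := by
  obtain ⟨s, -, hs⟩ := hβ.eq_pow_of_pow_eq_one hγ.pow_eq_one
  obtain ⟨s', -, hs'⟩ := hγ.eq_pow_of_pow_eq_one hβ.pow_eq_one
  refine ⟨s, s', hs, ?_⟩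
  rw [hβ.eq_orderOf, ← (hβ.isOfFinOrder (NeZero.ne n)).pow_eq_pow_iff_modEq, pow_one, pow_mul,
    hs, hs']

theorem stmt17_general (k : ℕ)
    (p₁ p₂ : Polynomial (ZMod 2))
    (hp₁ : IsPrimitivePoly k p₁) (hp₂ : IsPrimitivePoly k p₂) :
    ∀ t : ℕ, 1 ≤ t →
      {q : Polynomial (ZMod 2) |
          q.coeff 0 = 1 ∧ q.natDegree ≤ 2 ^ k - 2 ∧ q.support.card = t ∧ p₁ ∣ q}.ncard
        = {q : Polynomial (ZMod 2) |
          q.coeff 0 = 1 ∧ q.natDegree ≤ 2 ^ k - 2 ∧ q.support.card = t ∧ p₂ ∣ q}.ncard := by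
  intro t _
  obtain ⟨hd₁, hirr₁, ho₁⟩ := hp₁
  obtain ⟨hd₂, hirr₂, ho₂⟩ := hp₂
  have : Fact (Irreducible p₁) := ⟨hirr₁⟩
  have : Fact (Irreducible p₂) := ⟨hirr₂⟩
  set n := 2 ^ k - 1
  have hn : 0 < n := Nat.sub_pos_of_lt (Nat.one_lt_two_pow (hd₁ ▸ hirr₁.natDegree_pos).ne')
  have : NeZero n := ⟨hn.ne'⟩
  obtain ⟨φ⟩ := AdjoinRoot.nonempty_algHom_of_natDegree_dvd (p₁ := p₁) (p₂ := p₂)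
    (by rw [hd₁, hd₂])
  have hγ : IsPrimitiveRoot (φ (AdjoinRoot.root p₁)) n := by
    rw [← ho₁, ← orderOf_injective (φ : AdjoinRoot p₁ →* AdjoinRoot p₂) φ.toRingHom.injective]
    exact .orderOf _
  have hα : IsPrimitiveRoot (AdjoinRoot.root p₂) n := ho₂ ▸ .orderOf _
  obtain ⟨s, s', hs, hss'⟩ := hα.exists_pow_eq_and_mul_modEq_one hγ
  rw [show 2 ^ k - 2 = n - 1 by omega, AdjoinRoot.setOf_dvd_eq_nomialsVanishingAt hn,
    AdjoinRoot.setOf_dvd_eq_nomialsVanishingAt hn,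
    ← nomialsVanishingAt_map φ.toRingHom.injective, ← hs]
  exact ncard_nomialsVanishingAt_pow hn hα.pow_eq_one hss'

/-- The number of `t`-nomial multiples (constant term 1, degree at most
`2^k - 2`, exactly `t` nonzero coefficients) of a primitive polynomial of degree `k ≥ 2`
does not depend on the choice of the primitive polynomial. -/
theorem stmt17 (k : ℕ) (hk : 2 ≤ k)
    (p₁ p₂ : Polynomial (ZMod 2))
    (hp₁ : IsPrimitivePoly k p₁) (hp₂ : IsPrimitivePoly k p₂) :
    ∀ t : ℕ, 1 ≤ t →
      {q : Polynomial (ZMod 2) |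
          q.coeff 0 = 1 ∧ q.natDegree ≤ 2 ^ k - 2 ∧ q.support.card = t ∧ p₁ ∣ q}.ncard
        = {q : Polynomial (ZMod 2) |
          q.coeff 0 = 1 ∧ q.natDegree ≤ 2 ^ k - 2 ∧ q.support.card = t ∧ p₂ ∣ q}.ncard :=
  stmt17_general k p₁ p₂ hp₁ hp₂
end
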